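/- Let δ = μ − Σλᵢ. If δ ∉ ℕ, then any 1-cocycle on aff(1) with values in D_{λ,μ} of the form Ω(X_h, F) = Σ_α B_α h' F^{(α)} with constants B_α is a coboundary; explicitly, Ω = ∂b with b(F) = Σ_α (B_α/(δ−|α|))·F^{(α)}. -/

import Mathlib

/-- `L^ν_h(f) = h f' + ν h' f`. -/
noncomputable def lieDer (ν : ℝ) (h f : ℝ → ℝ) : ℝ → ℝ :=
  fun x => h x * deriv f x + ν * deriv h x * f x

/-- `F^{(α)} = f₁^{(α₁)} ⋯ fₙ^{(αₙ)}`. -/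
noncomputable def Fder {n : ℕ} (α : Fin n → ℕ) (F : Fin n → ℝ → ℝ) : ℝ → ℝ :=
  fun x => ∏ i, iteratedDeriv (α i) (F i) x

/-- The action `X_h · A = L^μ_h ∘ A - A ∘ L^λ_h` of a vector field on an `n`-ary operator;
`∂b(X_h) = X_h · b`. -/
noncomputable def opAct {n : ℕ} (μ : ℝ) (lam : Fin n → ℝ) (h : ℝ → ℝ)
    (A : (Fin n → ℝ → ℝ) → ℝ → ℝ) (F : Fin n → ℝ → ℝ) : ℝ → ℝ :=
  fun x => lieDer μ h (A F) x - ∑ i, A (Function.update F i (lieDer (lam i) h (F i))) x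

open Finset

lemma hasDerivAt_affine (a c x : ℝ) : HasDerivAt (fun t : ℝ => a + c * t) c x := by
  simpa using ((hasDerivAt_id x).const_mul c).const_add a

lemma deriv_affine (a c x : ℝ) : deriv (fun t : ℝ => a + c * t) x = c :=
  (hasDerivAt_affine a c x).deriv

lemma hasDerivAt_iteratedDeriv {f : ℝ → ℝ} (hf : ContDiff ℝ (⊤ : ℕ∞) f) (k : ℕ) (x : ℝ) :
    HasDerivAt (iteratedDeriv k f) (iteratedDeriv (k + 1) f x) x := by
  rw [iteratedDeriv_succ]
  exact ((hf.differentiable_iteratedDeriv k (by exact_mod_cast ENat.coe_lt_top k)) x).hasDerivAt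

lemma iteratedDeriv_lieDer (ν a c : ℝ) {f : ℝ → ℝ} (hf : ContDiff ℝ (⊤ : ℕ∞) f) (k : ℕ) :
    iteratedDeriv k (lieDer ν (fun t => a + c * t) f)
      = fun x => (a + c * x) * iteratedDeriv (k + 1) f x
          + (ν + k) * c * iteratedDeriv k f x := by
  induction k with
  | zero =>
    funext x
    simp [lieDer, iteratedDeriv_one, deriv_affine]
  | succ k ih =>
    funext x
    rw [iteratedDeriv_succ, ih]
    have h1 := (hasDerivAt_affine a c x).mul (hasDerivAt_iteratedDeriv hf (k + 1) x)
    have h2 := (hasDerivAt_iteratedDeriv hf k x).const_mul ((ν + k) * c)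
    rw [(show HasDerivAt (fun y => (a + c * y) * iteratedDeriv (k + 1) f y + (ν + ↑k) * c * iteratedDeriv k f y) _ x from h1.add h2).deriv]
    push_cast
    ring

lemma hasDerivAt_Fder {n : ℕ} (α : Fin n → ℕ) (F : Fin n → ℝ → ℝ)
    (hF : ∀ i, ContDiff ℝ (⊤ : ℕ∞) (F i)) (x : ℝ) :
    HasDerivAt (Fder α F)
      (∑ i, (∏ j ∈ univ.erase i, iteratedDeriv (α j) (F j) x)
          * iteratedDeriv (α i + 1) (F i) x) x := by
  have h := HasDerivAt.fun_finsetProd (u := univ)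
    (f := fun i => iteratedDeriv (α i) (F i))
    (f' := fun i => iteratedDeriv (α i + 1) (F i) x) (x := x)
    (fun i _ => hasDerivAt_iteratedDeriv (hF i) (α i) x)
  exact h

lemma Fder_update {n : ℕ} (α : Fin n → ℕ) (F : Fin n → ℝ → ℝ) (i : Fin n) (g : ℝ → ℝ) (x : ℝ) :
    Fder α (Function.update F i g) x
      = (∏ j ∈ univ.erase i, iteratedDeriv (α j) (F j) x) * iteratedDeriv (α i) g x := by
  rw [Fder, ← Finset.prod_erase_mul univ _ (mem_univ i)]
  congr 1
  · exact Finset.prod_congr rfl fun j hj => by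
      rw [Function.update_of_ne (Finset.ne_of_mem_erase hj)]
  · rw [Function.update_self]

lemma key {n : ℕ} (lam : Fin n → ℝ) (μ a c : ℝ) (α : Fin n → ℕ) (F : Fin n → ℝ → ℝ)
    (hF : ∀ i, ContDiff ℝ (⊤ : ℕ∞) (F i)) (x : ℝ) :
    lieDer μ (fun t => a + c * t) (Fder α F) x
      - ∑ i, Fder α (Function.update F i (lieDer (lam i) (fun t => a + c * t) (F i))) x
      = (μ - ∑ i, lam i - ((∑ i, α i : ℕ) : ℝ)) * c * Fder α F x := by
  have hPB : ∀ i : Fin n,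
      (∏ j ∈ univ.erase i, iteratedDeriv (α j) (F j) x) * iteratedDeriv (α i) (F i) x
        = Fder α F x := fun i =>
    Finset.prod_erase_mul univ (fun j => iteratedDeriv (α j) (F j) x) (mem_univ i)
  have hupd : ∀ i : Fin n,
      Fder α (Function.update F i (lieDer (lam i) (fun t => a + c * t) (F i))) x
        = (a + c * x) * ((∏ j ∈ univ.erase i, iteratedDeriv (α j) (F j) x)
              * iteratedDeriv (α i + 1) (F i) x)
          + (lam i + (α i : ℝ)) * c * Fder α F x := by
    intro i
    rw [Fder_update, iteratedDeriv_lieDer _ _ _ (hF i), ← hPB i]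
    ring
  rw [lieDer, (hasDerivAt_Fder α F hF x).deriv, deriv_affine]
  rw [Finset.sum_congr rfl fun i _ => hupd i, Finset.sum_add_distrib,
    ← Finset.mul_sum, ← Finset.sum_mul, ← Finset.sum_mul, Finset.sum_add_distrib]
  push_cast
  ring

/-- If `δ = μ - Σλᵢ ∉ ℕ`, every 1-cocycle `Ω(X_h,F) = Σ_α B_α h' F^{(α)}` (constant `B_α`)
on `aff(1)` is the coboundary of `b(F) = Σ_α (B_α/(δ-|α|)) F^{(α)}`. -/
theorem cocycle_is_coboundary (n : ℕ) (lam : Fin n → ℝ) (μ : ℝ)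
    (S : Finset (Fin n → ℕ)) (B : (Fin n → ℕ) → ℝ)
    (hδ : ¬ ∃ m : ℕ, μ - ∑ i, lam i = (m : ℝ)) :
    let δ : ℝ := μ - ∑ i, lam i
    let b : (Fin n → ℝ → ℝ) → ℝ → ℝ :=
      fun G x => ∑ α ∈ S, B α / (δ - ((∑ i, α i : ℕ) : ℝ)) * Fder α G x
    ∀ a c : ℝ, ∀ (F : Fin n → ℝ → ℝ), (∀ i, ContDiff ℝ (⊤ : ℕ∞) (F i)) → ∀ x,
      (∑ α ∈ S, B α * deriv (fun t => a + c * t) x * Fder α F x)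
        = opAct μ lam (fun t => a + c * t) b F x := by
  intro δ b a c F hF x
  have hne : ∀ α : Fin n → ℕ, δ - ((∑ i, α i : ℕ) : ℝ) ≠ 0 := by
    intro α h
    exact hδ ⟨∑ i, α i, by simpa [δ, sub_eq_zero] using h⟩
  set C : (Fin n → ℕ) → ℝ := fun α => B α / (δ - ((∑ i, α i : ℕ) : ℝ)) with hC
  -- derivative of b F
  have hbd : HasDerivAt (b F)
      (∑ α ∈ S, C α * deriv (Fder α F) x) x := by
    refine HasDerivAt.fun_sum fun α _ => ?_
    exact ((hasDerivAt_Fder α F hF x).deriv ▸ hasDerivAt_Fder α F hF x).const_mul (C α)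
  have hlie : lieDer μ (fun t => a + c * t) (b F) x
      = ∑ α ∈ S, C α * lieDer μ (fun t => a + c * t) (Fder α F) x := by
    rw [lieDer, hbd.deriv]
    simp only [lieDer, b]
    rw [Finset.mul_sum, Finset.mul_sum, ← Finset.sum_add_distrib]
    exact Finset.sum_congr rfl fun α _ => by ring
  have hupd : ∀ i : Fin n,
      b (Function.update F i (lieDer (lam i) (fun t => a + c * t) (F i))) x
        = ∑ α ∈ S, C α * Fder α (Function.update F i (lieDer (lam i) (fun t => a + c * t) (F i))) x :=
    fun i => rfl
  rw [opAct]
  simp only [hlie, hupd]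
  rw [Finset.sum_comm, ← Finset.sum_sub_distrib]
  refine Finset.sum_congr rfl fun α hα => ?_
  rw [← Finset.mul_sum, ← mul_sub, key lam μ a c α F hF x, deriv_affine]
  have hd : (μ - ∑ i, lam i - ((∑ i, α i : ℕ) : ℝ)) ≠ 0 := hne α
  rw [hC, mul_assoc (μ - ∑ i, lam i - ((∑ i, α i : ℕ) : ℝ)) c (Fder α F x),
    ← mul_assoc (B α / (μ - ∑ i, lam i - ((∑ i, α i : ℕ) : ℝ))) _ _,
    div_mul_cancel₀ _ hd, mul_assoc]
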